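/- Let η > 0 and δ₀ > 0 be real numbers with δ₀/η ∉ ℤ, and let δ : ℕ → ℝ satisfy δ(0) = δ₀ and δ(t+1) = δ(t) − η·sign(δ(t)) for all t (where sign(x) = 1 if x > 0, −1 if x < 0, and 0 if x = 0). Set T_s = ⌊δ₀/η⌋ and c = δ₀ − T_s·η, so that c ∈ (0, η). Then δ(t) = δ₀ − t·η for all integers 0 ≤ t ≤ T_s, and for all integers t ≥ T_s, δ(t) = c if t − T_s is even and δ(t) = c − η if t − T_s is odd. -/
import Mathlib


/-- Closed form of the per-coordinate sign-descent dynamics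
`δ(t+1) = δ(t) − η·sign(δ(t))` from `δ(0) = δ₀ > 0` with `δ₀/η ∉ ℤ`: linear
decrease until `T_s = ⌊δ₀/η⌋`, then a two-cycle between `c ∈ (0,η)` and `c − η`. -/
theorem stmt18 (η δ0 : ℝ) (hη : 0 < η) (hδ0 : 0 < δ0)
    (hnotint : ∀ n : ℤ, δ0 / η ≠ n)
    (δ : ℕ → ℝ) (h0 : δ 0 = δ0)
    (hrec : ∀ t, δ (t + 1) = δ t - η * Real.sign (δ t)) :
    let Ts : ℕ := ⌊δ0 / η⌋₊
    let c : ℝ := δ0 - Ts * η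
    0 < c ∧ c < η ∧
    (∀ t : ℕ, t ≤ Ts → δ t = δ0 - t * η) ∧
    (∀ t : ℕ, Ts ≤ t →
      (Even (t - Ts) → δ t = c) ∧ (Odd (t - Ts) → δ t = c - η)) := by
  intro Ts c
  have hpos : 0 < δ0 / η := div_pos hδ0 hη
  have hfl : (Ts : ℝ) ≤ δ0 / η := Nat.floor_le hpos.le
  have hfl2 : δ0 / η < Ts + 1 := Nat.lt_floor_add_one _
  have hne : δ0 / η ≠ (Ts : ℝ) := by
    have := hnotint (Ts : ℤ); simpa using this
  have hfl' : (Ts : ℝ) < δ0 / η := lt_of_le_of_ne hfl (fun h => hne h.symm)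
  have hc0 : 0 < c := by
    have : (Ts : ℝ) * η < δ0 := by
      rw [← lt_div_iff₀ hη]; exact hfl'
    simp only [c]; linarith
  have hcη : c < η := by
    have : δ0 < ((Ts : ℝ) + 1) * η := by
      rw [← div_lt_iff₀ hη]; exact hfl2
    simp only [c]; linarith
  have hlin : ∀ t : ℕ, t ≤ Ts → δ t = δ0 - t * η := by
    intro t ht
    induction t with
    | zero => simpa using h0
    | succ n ih =>
      have hn : n ≤ Ts := Nat.le_of_succ_le ht
      have hδn : δ n = δ0 - n * η := ih hn
      have hnlt : (n : ℝ) < Ts := by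
        exact_mod_cast Nat.lt_of_succ_le ht
      have hpn : 0 < δ n := by
        rw [hδn]
        have : (n : ℝ) * η < δ0 := by
          rw [← lt_div_iff₀ hη]; exact lt_trans hnlt hfl'
        linarith
      rw [hrec n, Real.sign_of_pos hpn, hδn]
      push_cast; ring
  refine ⟨hc0, hcη, hlin, ?_⟩
  have hTs : δ Ts = c := by
    have := hlin Ts le_rfl; simpa [c] using this
  have hTs1 : δ (Ts + 1) = c - η := by
    rw [hrec, hTs, Real.sign_of_pos hc0]; ring
  have hcyc : ∀ k : ℕ, δ (Ts + 2 * k) = c ∧ δ (Ts + 2 * k + 1) = c - η := by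
    intro k
    induction k with
    | zero => simpa using ⟨hTs, hTs1⟩
    | succ m ih =>
      have h1 : δ (Ts + 2 * (m + 1)) = c := by
        have : Ts + 2 * (m + 1) = (Ts + 2 * m + 1) + 1 := by ring
        rw [this, hrec, ih.2, Real.sign_of_neg (by linarith)]
        ring
      refine ⟨h1, ?_⟩
      rw [hrec, h1, Real.sign_of_pos hc0]; ring
  intro t ht
  constructor
  · rintro ⟨k, hk⟩
    have : t = Ts + 2 * k := by omega
    rw [this]; exact (hcyc k).1
  · rintro ⟨k, hk⟩
    have : t = Ts + 2 * k + 1 := by omega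
    rw [this]; exact (hcyc k).2
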